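/- arXiv:2209.10291 — 2 statements merged into one kernel-verified Lean document; each statement's English description precedes it below -/
import Mathlib

section
/- Let P be a tree-shaped polyomino and G a guard set for P under r-visibility. Then for every inner border b of P there is a guard g ∈ G such that b ⊆ V(g), i.e., the whole segment b is r-seen by a single guard. -/
open Computability Turing

noncomputable section DispersiveAGP

/-- The point in the plane corresponding to an integer lattice point. -/
def toPt (v : ℤ × ℤ) : ℝ × ℝ := ((v.1 : ℝ), (v.2 : ℝ))

/-- The closed unit square (cell) with lower-left corner `c`. -/
def cellSet (c : ℤ × ℤ) : Set (ℝ × ℝ) :=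
  Set.Icc (c.1 : ℝ) ((c.1 : ℝ) + 1) ×ˢ Set.Icc (c.2 : ℝ) ((c.2 : ℝ) + 1)

/-- The region of the plane covered by a set of cells. -/
def region (C : Finset (ℤ × ℤ)) : Set (ℝ × ℝ) := ⋃ c ∈ C, cellSet c

/-- Two cells are adjacent if they share a side. -/
def cellAdj (c d : ℤ × ℤ) : Prop := (c.1 - d.1).natAbs + (c.2 - d.2).natAbs = 1

/-- A polyomino: a nonempty finite set of cells, edge-connected. -/
def IsPolyomino (C : Finset (ℤ × ℤ)) : Prop :=
  C.Nonempty ∧ ∀ c ∈ C, ∀ d ∈ C,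
    Relation.ReflTransGen (fun a b => a ∈ C ∧ b ∈ C ∧ cellAdj a b) c d

/-- Number of cells of `C` incident to the lattice point `v`. -/
def cornerCount (C : Finset (ℤ × ℤ)) (v : ℤ × ℤ) : ℕ :=
  (if (v.1 - 1, v.2 - 1) ∈ C then 1 else 0) + (if (v.1, v.2 - 1) ∈ C then 1 else 0) +
  (if (v.1 - 1, v.2) ∈ C then 1 else 0) + (if (v.1, v.2) ∈ C then 1 else 0)

/-- `v` is a vertex of the polyomino `C` (a corner point of its boundary). -/
def IsVertex (C : Finset (ℤ × ℤ)) (v : ℤ × ℤ) : Prop :=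
  cornerCount C v = 1 ∨ cornerCount C v = 3 ∨
    (cornerCount C v = 2 ∧
      (((v.1 - 1, v.2 - 1) ∈ C ∧ (v.1, v.2) ∈ C) ∨
        ((v.1 - 1, v.2) ∈ C ∧ (v.1, v.2 - 1) ∈ C)))

/-- r-visibility: `p` sees `q` if the spanned axis-aligned rectangle lies in the polyomino. -/
def rSees (C : Finset (ℤ × ℤ)) (p q : ℝ × ℝ) : Prop :=
  Set.uIcc p.1 q.1 ×ˢ Set.uIcc p.2 q.2 ⊆ region C

/-- The r-visibility region of a point. -/
def vis (C : Finset (ℤ × ℤ)) (p : ℝ × ℝ) : Set (ℝ × ℝ) := {q | rSees C p q}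

/-- A (vertex) guard set of a polyomino. -/
def IsGuardSet (C : Finset (ℤ × ℤ)) (G : Finset (ℤ × ℤ)) : Prop :=
  (∀ g ∈ G, IsVertex C g) ∧ ∀ p ∈ region C, ∃ g ∈ G, rSees C (toPt g) p

/-- L1 distance in the plane. -/
def l1 (p q : ℝ × ℝ) : ℝ := |p.1 - q.1| + |p.2 - q.2|

/-- The L1 length of a polygonal chain. -/
def chainLen (l : List (ℝ × ℝ)) : ℝ := ((l.zip l.tail).map fun p => l1 p.1 p.2).sum

/-- A polygonal chain all of whose segments lie inside `S`. -/
def IsChainIn (S : Set (ℝ × ℝ)) (l : List (ℝ × ℝ)) : Prop :=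
  (∀ p ∈ l, p ∈ S) ∧ List.Chain' (fun a b => segment ℝ a b ⊆ S) l

/-- Geodesic L1 distance inside `S`: infimum of L1 lengths of polygonal chains
inside `S` joining the two points. -/
def geodDist (S : Set (ℝ × ℝ)) (p q : ℝ × ℝ) : ℝ :=
  sInf {d | ∃ l : List (ℝ × ℝ), l.head? = some p ∧ l.getLast? = some q ∧
    IsChainIn S l ∧ d = chainLen l}

/-- Dispersion distance of a guard set: minimum pairwise geodesic L1 distance. -/
def dispersion (C : Finset (ℤ × ℤ)) (G : Finset (ℤ × ℤ)) : ℝ :=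
  sInf {d | ∃ g ∈ G, ∃ g' ∈ G, g ≠ g' ∧ d = geodDist (region C) (toPt g) (toPt g')}

/-- A polyomino is simple if its complement in the plane is connected (no holes). -/
def SimplePoly (C : Finset (ℤ × ℤ)) : Prop := IsConnected (region C)ᶜ

/-- A polyomino is thin if it contains no 2×2 block of cells. -/
def Thin (C : Finset (ℤ × ℤ)) : Prop :=
  ∀ x y : ℤ, ¬((x, y) ∈ C ∧ (x + 1, y) ∈ C ∧ (x, y + 1) ∈ C ∧ (x + 1, y + 1) ∈ C)

/-- The dual graph of a polyomino: cells as vertices, side-adjacency as edges. -/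
def dualGraph (C : Finset (ℤ × ℤ)) : SimpleGraph {c // c ∈ C} where
  Adj a b := cellAdj a.1 b.1
  symm := by
    constructor
    intro a b h
    unfold cellAdj at *
    omega
  loopless := by
    constructor
    intro a h
    unfold cellAdj at h
    omega

/-- A polyomino is tree-shaped if its dual graph is a tree. -/
def TreeShaped (C : Finset (ℤ × ℤ)) : Prop := (dualGraph C).IsTree


section Rects

/-- An axis-aligned closed rectangle. -/
def IsRect (T : Set (ℝ × ℝ)) : Prop :=
  ∃ a b c d : ℝ, a ≤ b ∧ c ≤ d ∧ T = Set.Icc a b ×ˢ Set.Icc c d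

/-- A maximal axis-aligned rectangle contained in the polyomino. -/
def MaxRect (C : Finset (ℤ × ℤ)) (T : Set (ℝ × ℝ)) : Prop :=
  IsRect T ∧ T ⊆ region C ∧ ∀ T', IsRect T' → T' ⊆ region C → T ⊆ T' → T' = T

/-- A border of the polyomino: a unit axis-parallel segment with integer endpoints,
inside the polyomino, lying on the side of a maximal rectangle. -/
def IsBorder (C : Finset (ℤ × ℤ)) (p1 p2 : ℝ × ℝ) : Prop :=
  (∃ v w : ℤ × ℤ, p1 = toPt v ∧ p2 = toPt w) ∧ l1 p1 p2 = 1 ∧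
    (p1.1 = p2.1 ∨ p1.2 = p2.2) ∧ segment ℝ p1 p2 ⊆ region C ∧
    ∃ T, MaxRect C T ∧ segment ℝ p1 p2 ⊆ frontier T

/-- An inner border: a border not on the boundary of the polyomino. -/
def InnerBorder (C : Finset (ℤ × ℤ)) (p1 p2 : ℝ × ℝ) : Prop :=
  IsBorder C p1 p2 ∧ midpoint ℝ p1 p2 ∈ interior (region C)

/-- An outer border: a length-1 side of a maximal rectangle on the boundary. -/
def OuterBorder (C : Finset (ℤ × ℤ)) (p1 p2 : ℝ × ℝ) : Prop :=
  IsBorder C p1 p2 ∧ segment ℝ p1 p2 ⊆ frontier (region C)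

end Rects

/-!
A guard seeing the midpoint of a unit lattice segment sees the whole segment. The rectangle
spanned by the guard and the midpoint `(x, y + 1/2)` of a vertical segment meets the row of
cells at height `y` along a horizontal line through the interior of that row; every cell
containing a point of that line contains the full vertical unit segment above it, so the
rectangle can be stretched to any point `(x, t)` with `y ≤ t ≤ y + 1`. Horizontal segments
are symmetric. The guard that covers the midpoint of the border therefore sees all of it.
-/

section UnitSegment

variable {C : Finset (ℤ × ℤ)}

lemma eq_of_add_half_mem_Icc {c y : ℤ} (h : (y : ℝ) + 1 / 2 ∈ Set.Icc (c : ℝ) (c + 1)) :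
    c = y := by
  obtain ⟨hlo, hhi⟩ := h
  have hc : c < y + 1 := by exact_mod_cast (by linarith : (c : ℝ) < y + 1)
  have hy : y < c + 1 := by exact_mod_cast (by linarith : (y : ℝ) < c + 1)
  omega

lemma mem_region_of_mem_row_middle {s u : ℝ} {y : ℤ} (hu : u ∈ Set.Icc (y : ℝ) (y + 1))
    (h : (s, (y : ℝ) + 1 / 2) ∈ region C) : (s, u) ∈ region C := by
  simp only [region, Set.mem_iUnion, cellSet, Set.mem_prod] at h ⊢
  obtain ⟨c, hc, hs, hmid⟩ := h
  exact ⟨c, hc, hs, eq_of_add_half_mem_Icc hmid ▸ hu⟩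

lemma mem_region_of_mem_column_middle {s u : ℝ} {x : ℤ} (hs : s ∈ Set.Icc (x : ℝ) (x + 1))
    (h : ((x : ℝ) + 1 / 2, u) ∈ region C) : (s, u) ∈ region C := by
  simp only [region, Set.mem_iUnion, cellSet, Set.mem_prod] at h ⊢
  obtain ⟨c, hc, hmid, hu⟩ := h
  exact ⟨c, hc, eq_of_add_half_mem_Icc hmid ▸ hs, hu⟩

lemma rSees_of_rSees_row_middle {p : ℝ × ℝ} {s t : ℝ} {y : ℤ}
    (ht : t ∈ Set.Icc (y : ℝ) (y + 1)) (h : rSees C p (s, (y : ℝ) + 1 / 2)) :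
    rSees C p (s, t) := by
  rintro ⟨a, u⟩ ⟨ha, hu⟩
  rcases Set.uIcc_subset_uIcc_union_uIcc hu with hu | hu
  · exact h ⟨ha, hu⟩
  · have hmid : (y : ℝ) + 1 / 2 ∈ Set.Icc (y : ℝ) (y + 1) := ⟨by linarith, by linarith⟩
    exact mem_region_of_mem_row_middle (Set.uIcc_subset_Icc hmid ht hu)
      (h ⟨ha, Set.right_mem_uIcc⟩)

lemma rSees_of_rSees_column_middle {p : ℝ × ℝ} {s t : ℝ} {x : ℤ}
    (hs : s ∈ Set.Icc (x : ℝ) (x + 1)) (h : rSees C p ((x : ℝ) + 1 / 2, t)) :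
    rSees C p (s, t) := by
  rintro ⟨a, u⟩ ⟨ha, hu⟩
  rcases Set.uIcc_subset_uIcc_union_uIcc ha with ha | ha
  · exact h ⟨ha, hu⟩
  · have hmid : (x : ℝ) + 1 / 2 ∈ Set.Icc (x : ℝ) (x + 1) := ⟨by linarith, by linarith⟩
    exact mem_region_of_mem_column_middle (Set.uIcc_subset_Icc hmid hs ha)
      (h ⟨Set.right_mem_uIcc, hu⟩)

lemma segment_toPt_subset (v w : ℤ × ℤ) :
    segment ℝ (toPt v) (toPt w) ⊆ Set.uIcc (v.1 : ℝ) w.1 ×ˢ Set.uIcc (v.2 : ℝ) w.2 := by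
  have h := Prod.segment_subset (𝕜 := ℝ) (toPt v) (toPt w)
  rwa [segment_eq_uIcc, segment_eq_uIcc] at h

lemma midpoint_toPt (v w : ℤ × ℤ) :
    midpoint ℝ (toPt v) (toPt w) = (((v.1 : ℝ) + w.1) / 2, ((v.2 : ℝ) + w.2) / 2) := by
  simp only [midpoint_eq_smul_add, toPt, Prod.mk_add_mk, Prod.smul_mk, smul_eq_mul,
    invOf_eq_inv, Prod.mk.injEq]
  constructor <;> ring

lemma segment_subset_vis_of_rSees_midpoint_vertical {p : ℝ × ℝ} (x y : ℤ)
    (h : rSees C p (midpoint ℝ (toPt (x, y)) (toPt (x, y + 1)))) :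
    segment ℝ (toPt (x, y)) (toPt (x, y + 1)) ⊆ vis C p := by
  rintro ⟨s, t⟩ hq
  obtain ⟨hs, ht⟩ := segment_toPt_subset _ _ hq
  dsimp only at hs ht
  rw [Set.uIcc_self, Set.mem_singleton_iff] at hs
  rw [Int.cast_add, Int.cast_one, Set.uIcc_of_le (by linarith)] at ht
  have hmid : midpoint ℝ (toPt (x, y)) (toPt (x, y + 1)) = (s, (y : ℝ) + 1 / 2) := by
    rw [midpoint_toPt, hs]
    dsimp only
    push_cast
    ext <;> ring
  exact rSees_of_rSees_row_middle ht (hmid ▸ h)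

lemma segment_subset_vis_of_rSees_midpoint_horizontal {p : ℝ × ℝ} (x y : ℤ)
    (h : rSees C p (midpoint ℝ (toPt (x, y)) (toPt (x + 1, y)))) :
    segment ℝ (toPt (x, y)) (toPt (x + 1, y)) ⊆ vis C p := by
  rintro ⟨s, t⟩ hq
  obtain ⟨hs, ht⟩ := segment_toPt_subset _ _ hq
  dsimp only at hs ht
  rw [Set.uIcc_self, Set.mem_singleton_iff] at ht
  rw [Int.cast_add, Int.cast_one, Set.uIcc_of_le (by linarith)] at hs
  have hmid : midpoint ℝ (toPt (x, y)) (toPt (x + 1, y)) = ((x : ℝ) + 1 / 2, t) := by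
    rw [midpoint_toPt, ht]
    dsimp only
    push_cast
    ext <;> ring
  exact rSees_of_rSees_column_middle hs (hmid ▸ h)

lemma eq_unit_step_of_l1_toPt_eq_one {v w : ℤ × ℤ} (h : l1 (toPt v) (toPt w) = 1) :
    w = (v.1, v.2 + 1) ∨ v = (w.1, w.2 + 1) ∨ w = (v.1 + 1, v.2) ∨ v = (w.1 + 1, w.2) := by
  have hint : |v.1 - w.1| + |v.2 - w.2| = 1 := by
    simp only [l1, toPt] at h
    exact_mod_cast h
  obtain ⟨v1, v2⟩ := v
  obtain ⟨w1, w2⟩ := w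
  simp only [Prod.mk.injEq] at hint ⊢
  rcases abs_cases (v1 - w1) with ⟨h1, h1'⟩ | ⟨h1, h1'⟩ <;>
    rcases abs_cases (v2 - w2) with ⟨h2, h2'⟩ | ⟨h2, h2'⟩ <;> omega

theorem segment_subset_vis_of_rSees_midpoint {p : ℝ × ℝ} {v w : ℤ × ℤ}
    (hvw : l1 (toPt v) (toPt w) = 1) (h : rSees C p (midpoint ℝ (toPt v) (toPt w))) :
    segment ℝ (toPt v) (toPt w) ⊆ vis C p := by
  rcases eq_unit_step_of_l1_toPt_eq_one hvw with rfl | rfl | rfl | rfl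
  · exact segment_subset_vis_of_rSees_midpoint_vertical _ _ h
  · rw [segment_symm]
    rw [midpoint_comm] at h
    exact segment_subset_vis_of_rSees_midpoint_vertical _ _ h
  · exact segment_subset_vis_of_rSees_midpoint_horizontal _ _ h
  · rw [segment_symm]
    rw [midpoint_comm] at h
    exact segment_subset_vis_of_rSees_midpoint_horizontal _ _ h

end UnitSegment

theorem inner_border_seen_by_single_guard_general
    (C : Finset (ℤ × ℤ))
    (G : Finset (ℤ × ℤ)) (hG : IsGuardSet C G)
    (p1 p2 : ℝ × ℝ) (hb : InnerBorder C p1 p2) :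
    ∃ g ∈ G, segment ℝ p1 p2 ⊆ vis C (toPt g) := by
  obtain ⟨⟨⟨v, w, rfl, rfl⟩, hunit, -, hseg, -⟩, -⟩ := hb
  obtain ⟨g, hgG, hg⟩ := hG.2 _ (hseg (midpoint_mem_segment _ _))
  exact ⟨g, hgG, segment_subset_vis_of_rSees_midpoint hunit hg⟩

/-- In a tree-shaped polyomino, every inner border is entirely r-seen by a single
guard of any guard set. -/
theorem inner_border_seen_by_single_guard
    (C : Finset (ℤ × ℤ)) (hC : IsPolyomino C) (ht : TreeShaped C)
    (G : Finset (ℤ × ℤ)) (hG : IsGuardSet C G)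
    (p1 p2 : ℝ × ℝ) (hb : InnerBorder C p1 p2) :
    ∃ g ∈ G, segment ℝ p1 p2 ⊆ vis C (toPt g) :=
  inner_border_seen_by_single_guard_general C G hG p1 p2 hb

end DispersiveAGP
end

section
/- If two guards p and q are both vertices incident to the same T-shaped region of a thin polyomino (a 1-wide horizontal bar of 3 cells with one cell attached below the middle), and both are needed so that together they r-cover the T-shape, then the geodesic L1 distance between p and q is at most 5. -/
open Computability Turing

noncomputable section DispersiveAGP

/-- The cells of the T-shaped region (T-tetromino). -/
def tCells : Finset (ℤ × ℤ) := {(0, 1), (1, 1), (2, 1), (1, 0)}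

/-! The T-tetromino is the union of the bar `[0,3] × [1,2]` and the stem `[1,2] × [0,1]`, both
convex. Any two of its points are joined inside it by the chain that drops vertically to height
`1`, runs along the bar and rises again; its L1 length is at most `1 + 3 + 1`. -/

lemma region_mono {C D : Finset (ℤ × ℤ)} (h : C ⊆ D) : region C ⊆ region D :=
  Set.biUnion_subset_biUnion_left (by exact_mod_cast h)

lemma chainLen_nonneg (l : List (ℝ × ℝ)) : 0 ≤ chainLen l :=
  List.sum_nonneg fun _ hx => by
    obtain ⟨y, -, rfl⟩ := List.mem_map.mp hx
    exact add_nonneg (abs_nonneg _) (abs_nonneg _)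

lemma IsChainIn.mono {S T : Set (ℝ × ℝ)} {l : List (ℝ × ℝ)} (hST : S ⊆ T)
    (hl : IsChainIn S l) : IsChainIn T l :=
  ⟨fun p hp => hST (hl.1 p hp), hl.2.imp fun _ _ h => h.trans hST⟩

lemma geodDist_le_chainLen {S : Set (ℝ × ℝ)} {p q : ℝ × ℝ} {l : List (ℝ × ℝ)}
    (hp : l.head? = some p) (hq : l.getLast? = some q) (hl : IsChainIn S l) :
    geodDist S p q ≤ chainLen l :=
  csInf_le ⟨0, by rintro d ⟨l', -, -, -, rfl⟩; exact chainLen_nonneg l'⟩ ⟨l, hp, hq, hl, rfl⟩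

lemma chainLen_four (a b c d : ℝ × ℝ) :
    chainLen [a, b, c, d] = l1 a b + l1 b c + l1 c d := by
  simp only [chainLen, List.tail_cons, List.zip_cons_cons, List.zip_nil_right, List.map_cons,
    List.map_nil, List.sum_cons, List.sum_nil, add_zero, add_assoc]

def tBar : Set (ℝ × ℝ) := Set.Icc 0 3 ×ˢ Set.Icc 1 2

def tStem : Set (ℝ × ℝ) := Set.Icc 1 2 ×ˢ Set.Icc 0 1

lemma convex_tBar : Convex ℝ tBar := (convex_Icc _ _).prod (convex_Icc _ _)

lemma convex_tStem : Convex ℝ tStem := (convex_Icc _ _).prod (convex_Icc _ _)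

lemma region_tCells : region tCells = tBar ∪ tStem := by
  ext ⟨x, y⟩
  simp only [region, tCells, cellSet, tBar, tStem, Finset.mem_insert, Finset.mem_singleton,
    Set.mem_iUnion, Set.mem_union, Set.mem_prod, Set.mem_Icc, exists_prop, exists_eq_or_imp,
    exists_eq_left]
  push_cast
  constructor
  · rintro (h | h | h | h) <;> [left; left; left; right] <;> constructor <;> constructor <;>
      linarith [h.1.1, h.1.2, h.2.1, h.2.2]
  · rintro (⟨⟨hx0, hx3⟩, hy⟩ | h)
    · rcases le_total x 1 with hx1 | hx1
      · exact Or.inl ⟨⟨hx0, by linarith⟩, hy.1, by linarith⟩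
      rcases le_total x 2 with hx2 | hx2
      · exact Or.inr (Or.inl ⟨⟨hx1, by linarith⟩, hy.1, by linarith⟩)
      · exact Or.inr (Or.inr (Or.inl ⟨⟨hx2, by linarith⟩, hy.1, by linarith⟩))
    · exact Or.inr (Or.inr (Or.inr ⟨⟨h.1.1, by linarith⟩, h.2.1, by linarith⟩))

lemma mem_tBar_of_mem_region_tCells {a : ℝ × ℝ} (ha : a ∈ region tCells) : (a.1, 1) ∈ tBar := by
  rw [region_tCells] at ha
  rcases ha with ⟨⟨h0, h3⟩, -⟩ | ⟨⟨h1, h2⟩, -⟩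
  · exact ⟨⟨h0, h3⟩, by norm_num, by norm_num⟩
  · exact ⟨⟨by linarith, by linarith⟩, by norm_num, by norm_num⟩

lemma segment_drop_subset_region_tCells {a : ℝ × ℝ} (ha : a ∈ region tCells) :
    segment ℝ a (a.1, 1) ⊆ region tCells := by
  have hdrop := mem_tBar_of_mem_region_tCells ha
  rw [region_tCells] at ha ⊢
  rcases ha with ⟨hx, hy⟩ | ⟨hx, hy⟩
  · exact (convex_tBar.segment_subset ⟨hx, hy⟩ hdrop).trans Set.subset_union_left
  · exact (convex_tStem.segment_subset ⟨hx, hy⟩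
      (show ((a.1, 1) : ℝ × ℝ) ∈ tStem from ⟨hx, zero_le_one, le_rfl⟩)).trans
      Set.subset_union_right

def tChain (a b : ℝ × ℝ) : List (ℝ × ℝ) := [a, (a.1, 1), (b.1, 1), b]

lemma isChainIn_tChain {a b : ℝ × ℝ} (ha : a ∈ region tCells) (hb : b ∈ region tCells) :
    IsChainIn (region tCells) (tChain a b) := by
  have hbar : tBar ⊆ region tCells := region_tCells ▸ Set.subset_union_left
  refine ⟨?_, ?_⟩
  · simp only [tChain, List.mem_cons, List.not_mem_nil, or_false]
    rintro x (rfl | rfl | rfl | rfl)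
    exacts [ha, hbar (mem_tBar_of_mem_region_tCells ha),
      hbar (mem_tBar_of_mem_region_tCells hb), hb]
  · refine List.isChain_cons_cons.mpr ⟨segment_drop_subset_region_tCells ha,
      List.isChain_cons_cons.mpr ⟨?_, List.isChain_cons_cons.mpr ⟨?_, List.isChain_singleton _⟩⟩⟩
    · exact (convex_tBar.segment_subset (mem_tBar_of_mem_region_tCells ha)
        (mem_tBar_of_mem_region_tCells hb)).trans hbar
    · rw [segment_symm]
      exact segment_drop_subset_region_tCells hb

lemma chainLen_tChain_le {a b : ℝ × ℝ} (ha : a ∈ region tCells) (hb : b ∈ region tCells) :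
    chainLen (tChain a b) ≤ 5 := by
  have hxy : ∀ c ∈ region tCells, 0 ≤ c.1 ∧ c.1 ≤ 3 ∧ 0 ≤ c.2 ∧ c.2 ≤ 2 := by
    intro c hc
    rw [region_tCells] at hc
    rcases hc with ⟨⟨_, _⟩, _, _⟩ | ⟨⟨_, _⟩, _, _⟩ <;> refine ⟨?_, ?_, ?_, ?_⟩ <;> linarith
  obtain ⟨ha0, ha3, ha0', ha2⟩ := hxy a ha
  obtain ⟨hb0, hb3, hb0', hb2⟩ := hxy b hb
  rw [tChain, chainLen_four]
  simp only [l1, sub_self, abs_zero, zero_add, add_zero]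
  linarith [abs_le.mpr (⟨by linarith, by linarith⟩ : -1 ≤ a.2 - 1 ∧ a.2 - 1 ≤ 1),
    abs_le.mpr (⟨by linarith, by linarith⟩ : -3 ≤ a.1 - b.1 ∧ a.1 - b.1 ≤ 3),
    abs_le.mpr (⟨by linarith, by linarith⟩ : -1 ≤ 1 - b.2 ∧ 1 - b.2 ≤ 1)]

theorem tShape_coverers_within_distance_five_general
    (C : Finset (ℤ × ℤ))
    (hT : tCells ⊆ C) (p q : ℤ × ℤ)
    (hpT : toPt p ∈ region tCells) (hqT : toPt q ∈ region tCells) :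
    geodDist (region C) (toPt p) (toPt q) ≤ 5 :=
  calc geodDist (region C) (toPt p) (toPt q)
      ≤ chainLen (tChain (toPt p) (toPt q)) :=
        geodDist_le_chainLen rfl rfl ((isChainIn_tChain hpT hqT).mono (region_mono hT))
    _ ≤ 5 := chainLen_tChain_le hpT hqT

/-- If two guards at vertices incident to a T-shaped region of a thin polyomino are
both needed to jointly r-cover the T-shape, then their geodesic L1 distance is at
most 5. -/
theorem tShape_coverers_within_distance_five
    (C : Finset (ℤ × ℤ)) (hC : IsPolyomino C) (hthin : Thin C)
    (hT : tCells ⊆ C) (p q : ℤ × ℤ)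
    (hp : IsVertex C p) (hq : IsVertex C q)
    (hpT : toPt p ∈ region tCells) (hqT : toPt q ∈ region tCells)
    (hcover : ∀ x ∈ region tCells, rSees C (toPt p) x ∨ rSees C (toPt q) x)
    (hpblock : ¬∀ x ∈ region tCells, rSees C (toPt p) x)
    (hqblock : ¬∀ x ∈ region tCells, rSees C (toPt q) x) :
    geodDist (region C) (toPt p) (toPt q) ≤ 5 :=
  tShape_coverers_within_distance_five_general C hT p q hpT hqT

end DispersiveAGP
end
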